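/- Let ν(w) denote the number of pipe dreams of a permutation w, and for u ∈ S_m let p_u(w) denote the number of occurrences of the pattern u in w. Suppose c assigns an integer c(u) to every permutation u of {1,…,m} for every m ≥ 1, and satisfies, for every n ≥ 1 and every permutation w of {1,…,n}: c(w) = ν(w) − 1 − Σ_{m=1}^{n−1} Σ_{u ∈ S_m} c(u)·p_u(w). Then for every permutation w of {1,…,n} that avoids the pattern 132 (there are no a<b<c with w(a)<w(c)<w(b)), c(w) = 0. -/

import Mathlib

/-- The simple transposition corresponding to the cell `(i, j)`, namely
`s_{i+j-1}`, swapping `i+j-1` and `i+j` (as a permutation of the positive integers). -/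
def cellTrans (p : ℕ+ × ℕ+) : Equiv.Perm ℕ+ :=
  Equiv.swap (p.1 + p.2 - 1) (p.1 + p.2)

/-- Key used to order cells: rows increasing, and within a row, columns decreasing. -/
def cellKey (p : ℕ+ × ℕ+) : Lex (ℕ+ × ℕ+ᵒᵈ) :=
  toLex (p.1, OrderDual.toDual p.2)

/-- The product of the simple transpositions `s_{i+j-1}` over the cells `(i,j)` of `D`,
taken with `i` increasing and, for fixed `i`, `j` decreasing. -/
def pdWord (D : Finset (ℕ+ × ℕ+)) : Equiv.Perm ℕ+ :=
  (((D.image cellKey).sort (· ≤ ·)).map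
    (fun q => cellTrans ((ofLex q).1, OrderDual.ofDual (ofLex q).2))).prod

/-- The number of inversions of a permutation of the positive integers. -/
noncomputable def invNum (w : Equiv.Perm ℕ+) : ℕ :=
  Set.ncard {p : ℕ+ × ℕ+ | p.1 < p.2 ∧ w p.2 < w p.1}

/-- `D` is a pipe dream (RC-graph) of `w`. -/
def IsPipeDream (w : Equiv.Perm ℕ+) (D : Finset (ℕ+ × ℕ+)) : Prop :=
  D.card = invNum w ∧ pdWord D = w

/-- The number of pipe dreams of `w`. -/
noncomputable def nu (w : Equiv.Perm ℕ+) : ℕ :=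
  Set.ncard {D : Finset (ℕ+ × ℕ+) | IsPipeDream w D}

/-- The number of occurrences of the pattern 132 in `w`. -/
noncomputable def p132 (w : Equiv.Perm ℕ+) : ℕ :=
  Set.ncard {t : ℕ+ × ℕ+ × ℕ+ |
    t.1 < t.2.1 ∧ t.2.1 < t.2.2 ∧ w t.1 < w t.2.2 ∧ w t.2.2 < w t.2.1}

/-- The number of occurrences of the pattern 1432 in `w`. -/
noncomputable def p1432 (w : Equiv.Perm ℕ+) : ℕ :=
  Set.ncard {t : ℕ+ × ℕ+ × ℕ+ × ℕ+ |
    t.1 < t.2.1 ∧ t.2.1 < t.2.2.1 ∧ t.2.2.1 < t.2.2.2 ∧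
    w t.1 < w t.2.2.2 ∧ w t.2.2.2 < w t.2.2.1 ∧ w t.2.2.1 < w t.2.1}

/-- `w` avoids the pattern 1432. -/
def Avoids1432 (w : Equiv.Perm ℕ+) : Prop :=
  ¬ ∃ a b c d : ℕ+, a < b ∧ b < c ∧ c < d ∧ w a < w d ∧ w d < w c ∧ w c < w b

/-- The Rothe diagram of `w`. -/
def RD (w : Equiv.Perm ℕ+) : Set (ℕ+ × ℕ+) :=
  {p | p.2 < w p.1 ∧ p.1 < w⁻¹ p.2}

/-- The Lehmer code of `w`: `code(w)_i = #{j > i : w(j) < w(i)}`. -/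
noncomputable def lehmer (w : Equiv.Perm ℕ+) (i : ℕ+) : ℕ :=
  Set.ncard {j : ℕ+ | i < j ∧ w j < w i}

/-- The bottom pipe dream `B_w = {(i,j) : 1 ≤ j ≤ code(w)_i}` (as a set of cells). -/
def bottomSet (w : Equiv.Perm ℕ+) : Set (ℕ+ × ℕ+) :=
  {p | (p.2 : ℕ) ≤ lehmer w p.1}

/-- The top pipe dream `T_w = {(i,j) : 1 ≤ i ≤ code(w⁻¹)_j}` (as a set of cells). -/
def topSet (w : Equiv.Perm ℕ+) : Set (ℕ+ × ℕ+) :=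
  {p | (p.1 : ℕ) ≤ lehmer w⁻¹ p.2}

/-- `α(S)_m`: the number of cells of `S` on the diagonal `{(i,j) : i + j - 1 = m}`. -/
noncomputable def diagCount (S : Set (ℕ+ × ℕ+)) : ℕ+ → ℕ :=
  fun m => Set.ncard {p | p ∈ S ∧ p.1 + p.2 = m + 1}

/-- Ladder move of order `k` taking `D` to `D'`: writing `i = i₀ + k + 1` (so `i₀ = i - k - 1`
and automatically `i ≥ k + 2`), it requires `(i,j) ∈ D`, `(i,j+1) ∉ D`, `(i₀,j) ∉ D`,
`(i₀,j+1) ∉ D`, and `(i',j), (i',j+1) ∈ D` for all `i - k ≤ i' < i`; it removes `(i,j)` and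
adds `(i₀, j+1)`. -/
def LadderMove (k : ℕ) (D D' : Finset (ℕ+ × ℕ+)) : Prop :=
  ∃ i₀ j : ℕ+,
    (i₀ + k.succPNat, j) ∈ D ∧
    (i₀ + k.succPNat, j + 1) ∉ D ∧
    (i₀, j) ∉ D ∧
    (i₀, j + 1) ∉ D ∧
    (∀ i' : ℕ+, i₀ < i' → i' < i₀ + k.succPNat → (i', j) ∈ D ∧ (i', j + 1) ∈ D) ∧
    D' = insert (i₀, j + 1) (D.erase (i₀ + k.succPNat, j))

/-- The identification of `{1, …, n}` (as `Fin n`, with `i : Fin n` standing for the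
positive integer `i + 1`) with the positive integers `≤ n`. -/
def finPNatEquiv (n : ℕ) : Fin n ≃ {x : ℕ+ // (x : ℕ) ≤ n} where
  toFun i := ⟨⟨(i : ℕ) + 1, Nat.succ_pos _⟩, by
    show (i : ℕ) + 1 ≤ n
    omega⟩
  invFun x := ⟨(x.1 : ℕ) - 1, by
    rcases x with ⟨⟨v, hv⟩, h⟩
    show v - 1 < n
    simp only [PNat.mk_coe] at h
    omega⟩
  left_inv i := by ext; simp
  right_inv x := by
    rcases x with ⟨⟨v, hv⟩, h⟩
    refine Subtype.ext (PNat.coe_injective ?_)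
    show (v - 1) + 1 = v
    omega

/-- Extend a permutation of `{1, …, n}` to a permutation of the positive integers
fixing every integer greater than `n`. -/
def extendPerm {n : ℕ} (w : Equiv.Perm (Fin n)) : Equiv.Perm ℕ+ :=
  w.extendDomain (finPNatEquiv n)

/-- The number of occurrences of the pattern `u ∈ S_m` in `w ∈ S_n`. -/
noncomputable def pOcc {m n : ℕ} (u : Equiv.Perm (Fin m)) (w : Equiv.Perm (Fin n)) : ℕ :=
  Set.ncard {a : Fin m → Fin n | StrictMono a ∧
    ∀ i j : Fin m, i < j → (w (a i) < w (a j) ↔ u i < u j)}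

/-!
A pipe dream of `w` splits into its first row `J` and the rest, shifted up one row, so that
`w = R * shift v` with `R = ∏_{j ∈ J, decreasing} s_j`, and the cardinality condition forces
`ℓ(w) = ℓ(R) + ℓ(shift v)`. If `w` avoids 132 and `w 1 = t + 1`, length additivity carries every
inversion of `R` away from `1` to an inversion of `w` away from `1`, which by 132-avoidance ends
below `w 1`; a pigeonhole argument then gives `J ⊆ {1, …, t}`, and `R 1 = t + 1` gives the
reverse inclusion. So the first row is forced, the rest is a pipe dream of the shorter
132-avoiding permutation `v`, and by induction on the length `ν(w) = 1`. In the recursion for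
`c` every pattern occurring in `w` avoids 132 as well, so `c(w) = 0` by induction on `n`.
-/

namespace Equiv.Perm

variable {α : Type*} [LinearOrder α]

def inversionSet (w : Perm α) : Set (α × α) := {p | p.1 < p.2 ∧ w p.2 < w p.1}

def Avoids132 (w : Perm α) : Prop :=
  ¬ ∃ a b c, a < b ∧ b < c ∧ w a < w c ∧ w c < w b

@[simp]
theorem inversionSet_one : inversionSet (1 : Perm α) = ∅ := by
  ext p
  simpa [inversionSet] using le_of_lt

theorem inversionSet_mul_subset (x y : Perm α) :
    inversionSet (x * y) ⊆ inversionSet y ∪ Prod.map ⇑y⁻¹ ⇑y⁻¹ '' inversionSet x := by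
  rintro ⟨p, q⟩ ⟨hpq, hxy⟩
  rcases lt_or_gt_of_ne (y.injective.ne hpq.ne) with h | h
  · exact Or.inr ⟨(y p, y q), ⟨h, hxy⟩, by simp⟩
  · exact Or.inl ⟨hpq, h⟩

theorem disjoint_inversionSet_image (x y : Perm α) :
    _root_.Disjoint (inversionSet y) (Prod.map ⇑y⁻¹ ⇑y⁻¹ '' inversionSet x) := by
  rw [Set.disjoint_right]
  rintro _ ⟨⟨a, b⟩, ⟨hab, -⟩, rfl⟩ ⟨-, h⟩
  simp only [Prod.map, coe_inv, apply_symm_apply] at h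
  exact h.not_gt hab

theorem inversionSet_mul_of_forall {x y : Perm α} (h : ∀ a b, a < b → x b < x a → y⁻¹ a < y⁻¹ b) :
    inversionSet (x * y) = inversionSet y ∪ Prod.map ⇑y⁻¹ ⇑y⁻¹ '' inversionSet x := by
  refine (inversionSet_mul_subset x y).antisymm (Set.union_subset ?_ ?_)
  · rintro ⟨p, q⟩ ⟨hpq, hy⟩
    refine ⟨hpq, (lt_or_gt_of_ne (x.injective.ne (y.injective.ne hpq.ne'))).resolve_right ?_⟩
    intro hx
    exact lt_asymm hpq (by simpa using h _ _ hy hx)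
  · rintro _ ⟨⟨a, b⟩, ⟨hab, hx⟩, rfl⟩
    exact ⟨h a b hab hx, by simpa using hx⟩

theorem inversionSet_mul_finite {x y : Perm α} (hx : (inversionSet x).Finite)
    (hy : (inversionSet y).Finite) : (inversionSet (x * y)).Finite :=
  (hy.union (hx.image _)).subset (inversionSet_mul_subset x y)

theorem ncard_inversionSet_mul_le {x y : Perm α} (hx : (inversionSet x).Finite)
    (hy : (inversionSet y).Finite) :
    (inversionSet (x * y)).ncard ≤ (inversionSet x).ncard + (inversionSet y).ncard := by
  calc (inversionSet (x * y)).ncard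
      ≤ (inversionSet y ∪ Prod.map ⇑y⁻¹ ⇑y⁻¹ '' inversionSet x).ncard :=
        Set.ncard_le_ncard (inversionSet_mul_subset x y) (hy.union (hx.image _))
    _ ≤ (inversionSet y).ncard + (Prod.map ⇑y⁻¹ ⇑y⁻¹ '' inversionSet x).ncard :=
        Set.ncard_union_le _ _
    _ = _ := by
        rw [Set.ncard_image_of_injective _ (y⁻¹.injective.prodMap y⁻¹.injective), add_comm]

/-- Lengths add in a product exactly when `y` undoes no inversion of `x`. -/
theorem ncard_inversionSet_mul_eq_add_iff {x y : Perm α} (hx : (inversionSet x).Finite)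
    (hy : (inversionSet y).Finite) :
    (inversionSet (x * y)).ncard = (inversionSet x).ncard + (inversionSet y).ncard ↔
      ∀ a b, a < b → x b < x a → y⁻¹ a < y⁻¹ b := by
  have hunion : (inversionSet y ∪ Prod.map ⇑y⁻¹ ⇑y⁻¹ '' inversionSet x).ncard =
      (inversionSet x).ncard + (inversionSet y).ncard := by
    rw [Set.ncard_union_eq (disjoint_inversionSet_image x y) hy (hx.image _),
      Set.ncard_image_of_injective _ (y⁻¹.injective.prodMap y⁻¹.injective), add_comm]
  constructor
  · intro hlen a b hab hxab
    by_contra hba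
    have hlt : inversionSet (x * y) ⊂ inversionSet y ∪ Prod.map ⇑y⁻¹ ⇑y⁻¹ '' inversionSet x := by
      refine Set.ssubset_iff_subset_ne.mpr ⟨inversionSet_mul_subset x y, fun heq => ?_⟩
      have hmem : (y⁻¹ a, y⁻¹ b) ∈ inversionSet (x * y) :=
        heq ▸ Or.inr ⟨(a, b), ⟨hab, hxab⟩, rfl⟩
      exact hba hmem.1
    have := Set.ncard_lt_ncard hlt (hy.union (hx.image _))
    omega
  · intro h
    rw [inversionSet_mul_of_forall h, hunion]

theorem inversionSet_swap_of_covBy {a b : α} (hab : a ⋖ b) :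
    inversionSet (swap a b) = {(a, b)} := by
  ext ⟨p, q⟩
  simp only [inversionSet, Set.mem_ofPred_eq, Set.mem_singleton_iff, Prod.mk.injEq, swap_apply_def]
  have := hab.1
  have := @hab.2 p
  have := @hab.2 q
  constructor
  · intro h; split_ifs at h <;> grind
  · rintro ⟨rfl, rfl⟩; simp [hab.lt, hab.lt.ne']

theorem Avoids132.eq_one_of_apply_bot [OrderBot α] [WellFoundedLT α] {w : Perm α}
    (hw : Avoids132 w) (h : w ⊥ = ⊥) : w = 1 := by
  by_contra hne
  have hmoved : {x | w x ≠ x}.Nonempty := by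
    by_contra! hfix
    exact hne (Equiv.ext fun x => by simpa using Set.eq_empty_iff_forall_notMem.mp hfix x)
  -- the least moved point `x` is sent up, and so is its preimage: `⊥, x, w⁻¹ x` form a 132
  obtain ⟨x, hx, hmin⟩ := wellFounded_lt.has_min _ hmoved
  have hfixed : ∀ y < x, w y = y := fun y hy => not_not.mp fun hy' => hmin y hy' hy
  have hbot : ⊥ < x := bot_lt_iff_ne_bot.mpr fun hx' => hx (hx' ▸ h)
  have hwx : x < w x := by
    rcases lt_trichotomy (w x) x with hlt | heq | hgt
    · exact absurd (w.injective (hfixed _ hlt)) hlt.ne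
    · exact absurd heq hx
    · exact hgt
  have hy : w (w⁻¹ x) = x := w.apply_symm_apply x
  have hxy : x < w⁻¹ x := by
    rcases lt_trichotomy (w⁻¹ x) x with hlt | heq | hgt
    · exact absurd (hy.symm.trans (hfixed _ hlt)) hlt.ne'
    · rw [heq] at hy
      exact absurd hy hx
    · exact hgt
  exact hw ⟨⊥, x, w⁻¹ x, hbot, hxy, by rwa [h, hy], by rwa [hy]⟩

end Equiv.Perm

open Equiv Equiv.Perm

theorem invNum_eq_ncard (w : Perm ℕ+) : invNum w = (inversionSet w).ncard := rfl

@[simp]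
theorem PNat.add_one_ne_one (n : ℕ+) : n + 1 ≠ 1 := (PNat.lt_add_left 1 n).ne'

@[simp]
theorem PNat.one_ne_add_one (n : ℕ+) : 1 ≠ n + 1 := (PNat.lt_add_left 1 n).ne

theorem PNat.one_lt_add (a b : ℕ+) : 1 < a + b :=
  one_le.trans_lt (PNat.lt_add_left b a)


def shiftEquiv : ℕ+ ≃ {x : ℕ+ // 1 < x} where
  toFun n := ⟨n + 1, PNat.lt_add_left 1 n⟩
  invFun x := x.1 - 1
  left_inv _ := PNat.add_sub
  right_inv x := Subtype.ext (PNat.sub_add_of_lt x.2)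

def shiftPerm : Perm ℕ+ →* Perm ℕ+ := extendDomainHom shiftEquiv

theorem shiftPerm_apply_one (w : Perm ℕ+) : shiftPerm w 1 = 1 :=
  extendDomain_apply_not_subtype _ _ (lt_irrefl 1)

theorem shiftPerm_apply_add_one (w : Perm ℕ+) (n : ℕ+) : shiftPerm w (n + 1) = w n + 1 :=
  extendDomain_apply_image _ _ n

theorem shiftPerm_injective : Function.Injective shiftPerm :=
  extendDomainHom_injective _

theorem exists_shiftPerm_eq {v : Perm ℕ+} (hv : v 1 = 1) : ∃ w, shiftPerm w = v := by
  have hmem : ∀ x, 1 < v x ↔ 1 < x := fun x => by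
    simp only [one_lt_iff_ne_one, v.injective.ne_iff' hv]
  refine ⟨shiftEquiv.permCongr.symm (v.subtypePerm hmem), Equiv.ext fun x => ?_⟩
  rcases eq_or_ne x 1 with rfl | hx
  · rw [shiftPerm_apply_one, hv]
  · simp [shiftPerm, extendDomain_apply_subtype _ _ (one_lt_iff_ne_one.mpr hx)]

theorem shiftPerm_swap (a b : ℕ+) : shiftPerm (swap a b) = swap (a + 1) (b + 1) := by
  ext x
  rcases eq_or_ne x 1 with rfl | hx
  · rw [shiftPerm_apply_one, swap_apply_of_ne_of_ne (PNat.lt_add_left 1 a).ne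
      (PNat.lt_add_left 1 b).ne]
  · obtain ⟨n, rfl⟩ := PNat.exists_eq_succ_of_ne_one hx
    rw [shiftPerm_apply_add_one, (add_left_injective 1).swap_apply]

theorem inversionSet_shiftPerm (w : Perm ℕ+) :
    inversionSet (shiftPerm w) = Prod.map (· + 1) (· + 1) '' inversionSet w := by
  ext ⟨p, q⟩
  constructor
  · rintro ⟨hpq, hw⟩
    obtain ⟨p, rfl⟩ := PNat.exists_eq_succ_of_ne_one (n := p) (by
      rintro rfl
      exact not_lt_one (shiftPerm_apply_one w ▸ hw))
    obtain ⟨q, rfl⟩ := PNat.exists_eq_succ_of_ne_one (n := q)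
      ((PNat.lt_add_left 1 p).trans hpq).ne'
    rw [shiftPerm_apply_add_one, shiftPerm_apply_add_one] at hw
    exact ⟨(p, q), ⟨by simpa using hpq, by simpa using hw⟩, rfl⟩
  · rintro ⟨⟨p, q⟩, ⟨hpq, hw⟩, h⟩
    simp only [Prod.map, Prod.mk.injEq] at h
    obtain ⟨rfl, rfl⟩ := h
    refine ⟨by simpa using hpq, ?_⟩
    simpa [shiftPerm_apply_add_one] using hw

theorem ncard_inversionSet_shiftPerm (w : Perm ℕ+) :
    (inversionSet (shiftPerm w)).ncard = (inversionSet w).ncard := by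
  rw [inversionSet_shiftPerm,
    Set.ncard_image_of_injective _ ((add_left_injective 1).prodMap (add_left_injective 1))]

theorem inversionSet_shiftPerm_finite_iff (w : Perm ℕ+) :
    (inversionSet (shiftPerm w)).Finite ↔ (inversionSet w).Finite := by
  rw [inversionSet_shiftPerm,
    Set.finite_image_iff ((add_left_injective 1).prodMap (add_left_injective 1)).injOn]

theorem cellKey_injective : Function.Injective cellKey := fun p q h => by
  simpa [cellKey, Prod.ext_iff] using h

@[simp]
theorem pdWord_empty : pdWord ∅ = 1 := by
  simp [pdWord]

theorem pdWord_insert {p : ℕ+ × ℕ+} {D : Finset (ℕ+ × ℕ+)} (hp : p ∉ D)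
    (h : ∀ q ∈ D, cellKey p ≤ cellKey q) : pdWord (insert p D) = cellTrans p * pdWord D := by
  rw [pdWord, Finset.image_insert, Finset.sort_insert _ (Finset.forall_mem_image.mpr h)
    (by simpa [cellKey_injective.eq_iff] using hp)]
  rfl

theorem pdWord_union {A B : Finset (ℕ+ × ℕ+)}
    (h : ∀ p ∈ A, ∀ q ∈ B, cellKey p < cellKey q) : pdWord (A ∪ B) = pdWord A * pdWord B := by
  induction A using Finset.induction_on_min_value cellKey with
  | empty => simp
  | insert a A ha hmin ih =>
    have hB : ∀ q ∈ B, cellKey a < cellKey q := h a (Finset.mem_insert_self a A)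
    rw [Finset.insert_union, pdWord_insert, pdWord_insert ha hmin,
      ih fun p hp => h p (Finset.mem_insert_of_mem hp), mul_assoc]
    · simpa [ha] using fun hq => (hB a hq).false
    · intro q hq
      rcases Finset.mem_union.mp hq with hq | hq
      exacts [hmin q hq, (hB q hq).le]

theorem cellTrans_eq_swap (p : ℕ+ × ℕ+) :
    cellTrans p = swap (p.1 + p.2 - 1) (p.1 + p.2 - 1 + 1) := by
  rw [cellTrans, PNat.sub_add_of_lt (PNat.one_lt_add _ _)]

theorem inversionSet_cellTrans (p : ℕ+ × ℕ+) :
    inversionSet (cellTrans p) = {(p.1 + p.2 - 1, p.1 + p.2 - 1 + 1)} := by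
  rw [cellTrans_eq_swap, inversionSet_swap_of_covBy (Order.covBy_add_one _)]

theorem cellTrans_one_left (j : ℕ+) : cellTrans (1, j) = swap j (j + 1) := by
  rw [cellTrans, add_comm, PNat.add_sub]

theorem cellTrans_shift (p : ℕ+ × ℕ+) :
    cellTrans (p.1 + 1, p.2) = shiftPerm (cellTrans p) := by
  rw [cellTrans_eq_swap, cellTrans_eq_swap, shiftPerm_swap, add_right_comm p.1 1 p.2,
    PNat.add_sub, PNat.sub_add_of_lt (PNat.one_lt_add _ _)]

theorem inversionSet_pdWord_finite (D : Finset (ℕ+ × ℕ+)) : (inversionSet (pdWord D)).Finite := by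
  induction D using Finset.induction_on_min_value cellKey with
  | empty => simp
  | insert p D hp hmin ih =>
    rw [pdWord_insert hp hmin]
    exact inversionSet_mul_finite (by simp [inversionSet_cellTrans]) ih

theorem ncard_inversionSet_pdWord_le (D : Finset (ℕ+ × ℕ+)) :
    (inversionSet (pdWord D)).ncard ≤ D.card := by
  induction D using Finset.induction_on_min_value cellKey with
  | empty => simp
  | insert p D hp hmin ih =>
    rw [pdWord_insert hp hmin, Finset.card_insert_of_notMem hp]
    refine (ncard_inversionSet_mul_le (by simp [inversionSet_cellTrans])
      (inversionSet_pdWord_finite D)).trans ?_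
    rw [inversionSet_cellTrans, Set.ncard_singleton]
    omega

def firstRow (J : Finset ℕ+) : Finset (ℕ+ × ℕ+) := J.image ((1 : ℕ+), ·)

def shiftDown (D : Finset (ℕ+ × ℕ+)) : Finset (ℕ+ × ℕ+) := D.image fun p => (p.1 + 1, p.2)

theorem pdWord_shiftDown (D : Finset (ℕ+ × ℕ+)) : pdWord (shiftDown D) = shiftPerm (pdWord D) := by
  induction D using Finset.induction_on_min_value cellKey with
  | empty => simp [shiftDown]
  | insert p D hp hmin ih =>
    rw [shiftDown, Finset.image_insert, pdWord_insert hp hmin, map_mul, ← cellTrans_shift, ← ih,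
      shiftDown, pdWord_insert]
    · simpa using hp
    · simp only [Finset.mem_image, forall_exists_index, and_imp, forall_apply_eq_imp_iff₂]
      intro q hq
      simpa [cellKey, Prod.Lex.toLex_le_toLex] using hmin q hq

theorem pdWord_firstRow_insert {a : ℕ+} {J : Finset ℕ+} (h : ∀ x ∈ J, x < a) :
    pdWord (firstRow (insert a J)) = swap a (a + 1) * pdWord (firstRow J) := by
  rw [firstRow, Finset.image_insert, pdWord_insert, cellTrans_one_left, firstRow]
  · simpa using fun hJ => (h a hJ).false
  · simpa [cellKey, Prod.Lex.toLex_le_toLex] using fun x hx => (h x hx).le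

theorem pdWord_firstRow_union_shiftDown (J : Finset ℕ+) (D : Finset (ℕ+ × ℕ+)) :
    pdWord (firstRow J ∪ shiftDown D) = pdWord (firstRow J) * shiftPerm (pdWord D) := by
  rw [pdWord_union, pdWord_shiftDown]
  simp [firstRow, shiftDown, cellKey, Prod.Lex.toLex_lt_toLex]
  grind [PNat.lt_add_left]

theorem card_firstRow (J : Finset ℕ+) : (firstRow J).card = J.card :=
  Finset.card_image_of_injective _ (Prod.mk_right_injective 1)

theorem card_firstRow_union_shiftDown (J : Finset ℕ+) (D : Finset (ℕ+ × ℕ+)) :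
    (firstRow J ∪ shiftDown D).card = J.card + D.card := by
  rw [Finset.card_union_of_disjoint, card_firstRow, shiftDown, Finset.card_image_of_injective]
  · intro p q h; simpa [Prod.ext_iff] using h
  · simp [firstRow, shiftDown, Finset.disjoint_left]

theorem exists_eq_firstRow_union_shiftDown (D : Finset (ℕ+ × ℕ+)) :
    ∃ J D', D = firstRow J ∪ shiftDown D' := by
  have hinj : Function.Injective fun p : ℕ+ × ℕ+ => (p.1 + 1, p.2) := fun p q h => by
    simpa [Prod.ext_iff] using h
  refine ⟨(D.filter (·.1 = 1)).image Prod.snd, D.preimage _ hinj.injOn, ?_⟩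
  ext ⟨i, j⟩
  rcases eq_or_ne i 1 with rfl | hi
  · simp [firstRow, shiftDown]
  · obtain ⟨i, rfl⟩ := PNat.exists_eq_succ_of_ne_one hi
    simp [firstRow, shiftDown]

section FirstRow

variable {J : Finset ℕ+}

theorem pdWord_firstRow_apply_of_forall_lt {x : ℕ+} (h : ∀ a ∈ J, a + 1 < x) :
    pdWord (firstRow J) x = x := by
  induction J using Finset.induction_on_max with
  | empty => simp [firstRow]
  | insert a J hlt ih =>
    have hax : a + 1 < x := h a (Finset.mem_insert_self a J)
    rw [pdWord_firstRow_insert hlt, Perm.mul_apply,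
      ih fun b hb => h b (Finset.mem_insert_of_mem hb),
      swap_apply_of_ne_of_ne ((PNat.lt_add_right a 1).trans hax).ne' hax.ne']

theorem pdWord_firstRow_apply_add_one {a : ℕ+} (ha : a ∈ J) :
    pdWord (firstRow J) (a + 1) = a := by
  induction J using Finset.induction_on_max with
  | empty => simp at ha
  | insert b J hlt ih =>
    rw [pdWord_firstRow_insert hlt, Perm.mul_apply]
    rcases Finset.mem_insert.mp ha with rfl | ha
    · rw [pdWord_firstRow_apply_of_forall_lt fun c hc => by simpa using hlt c hc,
        swap_apply_right]
    · have hab := hlt a ha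
      rw [ih ha, swap_apply_of_ne_of_ne hab.ne (hab.trans (PNat.lt_add_right b 1)).ne]

theorem pdWord_firstRow_apply_one_le {m : ℕ+} (hm : m ∉ J) : pdWord (firstRow J) 1 ≤ m := by
  induction J using Finset.induction_on_max with
  | empty => simp [firstRow]
  | insert a J hlt ih =>
    rw [Finset.mem_insert, not_or] at hm
    have hle := ih hm.2
    rw [pdWord_firstRow_insert hlt, Perm.mul_apply, swap_apply_def]
    have hma : (m : ℕ) ≠ a := fun h => hm.1 (PNat.coe_injective h)
    rw [← PNat.coe_le_coe] at hle ⊢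
    split_ifs with h₁ h₂
    · rw [h₁] at hle; push_cast; omega
    · rw [h₂] at hle; push_cast at hle ⊢; omega
    · exact hle

theorem eq_Icc_of_pdWord_firstRow {t : ℕ+} (h₁ : pdWord (firstRow J) 1 = t + 1)
    (h : ∀ a b, 1 < a → a < b → pdWord (firstRow J) b < pdWord (firstRow J) a →
      pdWord (firstRow J) b ≤ t) :
    J = Finset.Icc 1 t := by
  set R := pdWord (firstRow J)
  ext m
  rw [Finset.mem_Icc, and_iff_right (one_le : 1 ≤ m)]
  constructor
  · intro hm
    by_contra! htm
    have hR : R (m + 1) = m := pdWord_firstRow_apply_add_one hm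
    -- `R` would map `{1, …, m}` injectively into `{1, …, m - 1}`.
    have hmaps : Set.MapsTo R (Finset.Icc 1 m) (Finset.Ico 1 m) := by
      intro x hx
      simp only [Finset.coe_Icc, Finset.coe_Ico, Set.mem_Icc, Set.mem_Ico] at hx ⊢
      refine ⟨one_le, lt_of_le_of_ne ?_ fun hxm => ?_⟩
      · by_contra! hmx
        rcases eq_or_ne x 1 with rfl | hx1
        · exact (h₁ ▸ hmx).not_ge (PNat.add_one_le_iff.mpr htm)
        · have := h x (m + 1) (one_lt_iff_ne_one.mpr hx1) (PNat.lt_add_one_iff.mpr hx.2)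
            (by rwa [hR])
          exact htm.not_ge (hR ▸ this)
      · have := R.injective (hxm.trans hR.symm)
        exact (PNat.lt_add_one_iff.mpr hx.2).ne this
    have := Finset.card_le_card_of_injOn R hmaps R.injective.injOn
    rw [PNat.card_Icc, PNat.card_Ico, PNat.one_coe] at this
    have := m.pos
    omega
  · intro hmt
    by_contra hm
    exact (pdWord_firstRow_apply_one_le hm).not_gt (h₁ ▸ (PNat.lt_add_one_iff.mpr hmt))

end FirstRow

section Cycle

variable (t : ℕ+)

theorem pdWord_firstRow_Icc_apply_add_one (y : ℕ+) :
    pdWord (firstRow (Finset.Icc 1 t)) (y + 1) = if y ≤ t then y else y + 1 := by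
  split_ifs with hy
  · exact pdWord_firstRow_apply_add_one (Finset.mem_Icc.mpr ⟨one_le, hy⟩)
  · refine pdWord_firstRow_apply_of_forall_lt fun a ha => ?_
    have := (Finset.mem_Icc.mp ha).2
    exact (add_lt_add_iff_right 1).mpr (this.trans_lt (not_le.mp hy))

theorem pdWord_firstRow_Icc_apply_one : pdWord (firstRow (Finset.Icc 1 t)) 1 = t + 1 := by
  set c := pdWord (firstRow (Finset.Icc 1 t))
  refine le_antisymm (pdWord_firstRow_apply_one_le (by simp)) (not_lt.mp fun hlt => ?_)
  have hc : c (c 1 + 1) = c 1 :=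
    pdWord_firstRow_apply_add_one (Finset.mem_Icc.mpr ⟨one_le, PNat.lt_add_one_iff.mp hlt⟩)
  exact PNat.add_one_ne_one _ (c.injective hc)

theorem strictMonoOn_pdWord_firstRow_Icc :
    StrictMonoOn (pdWord (firstRow (Finset.Icc 1 t))) {x | 1 < x} := by
  intro x hx y hy hxy
  obtain ⟨x, rfl⟩ := PNat.exists_eq_succ_of_ne_one (ne_of_gt hx)
  obtain ⟨y, rfl⟩ := PNat.exists_eq_succ_of_ne_one (ne_of_gt hy)
  simp only [pdWord_firstRow_Icc_apply_add_one]
  split_ifs <;>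
    simp only [← PNat.coe_lt_coe, ← PNat.coe_le_coe, PNat.add_coe, PNat.one_coe] at * <;> omega

theorem ncard_inversionSet_pdWord_firstRow_Icc :
    (inversionSet (pdWord (firstRow (Finset.Icc 1 t)))).ncard = t := by
  refine le_antisymm ((ncard_inversionSet_pdWord_le _).trans ?_) ?_
  · simp [card_firstRow]
  · have hsub : ((Finset.Icc 1 t).image fun x => ((1 : ℕ+), x + 1) : Set (ℕ+ × ℕ+)) ⊆
        inversionSet (pdWord (firstRow (Finset.Icc 1 t))) := by
      intro p hp
      simp only [Finset.coe_image, Finset.coe_Icc, Set.mem_image, Set.mem_Icc] at hp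
      obtain ⟨x, ⟨-, hxt⟩, rfl⟩ := hp
      refine ⟨PNat.lt_add_left 1 x, ?_⟩
      rw [pdWord_firstRow_Icc_apply_one, pdWord_firstRow_Icc_apply_add_one, if_pos hxt]
      exact PNat.lt_add_one_iff.mpr hxt
    have := Set.ncard_le_ncard hsub (inversionSet_pdWord_finite _)
    rwa [Set.ncard_coe_finset, Finset.card_image_of_injective _ (fun x y h => by simpa using h),
      PNat.card_Icc, PNat.one_coe, Nat.add_sub_cancel] at this

end Cycle

theorem fst_eq_one_of_mem_inversionSet_pdWord_firstRow_Icc {t : ℕ+} {p : ℕ+ × ℕ+}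
    (hp : p ∈ inversionSet (pdWord (firstRow (Finset.Icc 1 t)))) : p.1 = 1 := by
  by_contra h
  have h1 : 1 < p.1 := one_lt_iff_ne_one.mpr h
  exact hp.2.not_gt (strictMonoOn_pdWord_firstRow_Icc t h1 (h1.trans hp.1) hp.1)

theorem Equiv.Perm.Avoids132.exists_eq_mul_shiftPerm {W : Perm ℕ+} {t : ℕ+} (hW : Avoids132 W)
    (hfin : (inversionSet W).Finite) (hW1 : W 1 = t + 1) :
    ∃ W', W = pdWord (firstRow (Finset.Icc 1 t)) * shiftPerm W' ∧
      (inversionSet W).ncard = t + (inversionSet W').ncard ∧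
      Avoids132 W' ∧ (inversionSet W').Finite := by
  set c := pdWord (firstRow (Finset.Icc 1 t))
  have hv1 : (c⁻¹ * W) 1 = 1 := by
    rw [Perm.mul_apply, hW1, ← pdWord_firstRow_Icc_apply_one t]
    exact c.symm_apply_apply 1
  obtain ⟨W', hW'⟩ := exists_shiftPerm_eq hv1
  have hdec : W = c * shiftPerm W' := by rw [hW', mul_inv_cancel_left]
  have hgood : ∀ a b, a < b → c b < c a → (shiftPerm W')⁻¹ a < (shiftPerm W')⁻¹ b := by
    intro a b hab hc
    obtain rfl : a = 1 := fst_eq_one_of_mem_inversionSet_pdWord_firstRow_Icc (p := (a, b)) ⟨hab, hc⟩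
    rw [Perm.inv_eq_iff_eq.mpr (shiftPerm_apply_one W').symm]
    exact one_lt_iff_ne_one.mpr fun h =>
      hab.ne' ((Perm.inv_eq_iff_eq.mp h).trans (shiftPerm_apply_one W'))
  have hsub : inversionSet (shiftPerm W') ⊆ inversionSet W :=
    hdec ▸ inversionSet_mul_of_forall hgood ▸ Set.subset_union_left
  have hfin' : (inversionSet W').Finite :=
    (inversionSet_shiftPerm_finite_iff W').mp (hfin.subset hsub)
  refine ⟨W', hdec, ?_, ?_, hfin'⟩
  · rw [hdec, (ncard_inversionSet_mul_eq_add_iff (inversionSet_pdWord_finite _)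
      ((inversionSet_shiftPerm_finite_iff W').mpr hfin')).mpr hgood,
      ncard_inversionSet_pdWord_firstRow_Icc, ncard_inversionSet_shiftPerm]
  · -- `c` is increasing on `{2, 3, …}`, where the values of `shiftPerm W'` lie
    have hlt_iff : ∀ x y, W' x < W' y ↔ W (x + 1) < W (y + 1) := fun x y => by
      rw [hdec, Perm.mul_apply, Perm.mul_apply, shiftPerm_apply_add_one, shiftPerm_apply_add_one,
        (strictMonoOn_pdWord_firstRow_Icc t).lt_iff_lt (PNat.lt_add_left 1 _)
          (PNat.lt_add_left 1 _), add_lt_add_iff_right]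
    rintro ⟨a, b, d, hab, hbd, h₁, h₂⟩
    exact hW ⟨a + 1, b + 1, d + 1, by simpa using hab, by simpa using hbd,
      (hlt_iff a d).mp h₁, (hlt_iff d b).mp h₂⟩

theorem Equiv.Perm.Avoids132.apply_lt_apply_one_of_mul {R v : Perm ℕ+} (hW : Avoids132 (R * v))
    (hv : v 1 = 1) (hgood : ∀ a b, a < b → R b < R a → v⁻¹ a < v⁻¹ b) {a b : ℕ+} (ha : 1 < a)
    (hab : a < b) (hR : R b < R a) : R b < R 1 := by
  have hp : 1 < v⁻¹ a := one_lt_iff_ne_one.mpr fun h =>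
    ha.ne' ((Perm.inv_eq_iff_eq.mp h).trans hv)
  have hvb : (R * v) (v⁻¹ b) = R b := congrArg R (v.apply_symm_apply b)
  have hva : (R * v) (v⁻¹ a) = R a := congrArg R (v.apply_symm_apply a)
  have hv1 : (R * v) 1 = R 1 := congrArg R hv
  refine lt_of_le_of_ne (not_lt.mp fun hlt => hW ⟨1, v⁻¹ a, v⁻¹ b, hp, hgood a b hab hR, ?_, ?_⟩)
    fun h => (ha.trans hab).ne' (R.injective h)
  · rwa [hv1, hvb]
  · rwa [hvb, hva]

theorem isPipeDream_iff_of_eq_mul_shiftPerm {W W' : Perm ℕ+} {t : ℕ+} (hW : Avoids132 W)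
    (hW1 : W 1 = t + 1) (hdec : W = pdWord (firstRow (Finset.Icc 1 t)) * shiftPerm W')
    (hlen : (inversionSet W).ncard = t + (inversionSet W').ncard) {D : Finset (ℕ+ × ℕ+)} :
    IsPipeDream W D ↔ ∃ D', IsPipeDream W' D' ∧ D = firstRow (Finset.Icc 1 t) ∪ shiftDown D' := by
  constructor
  · rintro ⟨hcard, hword⟩
    obtain ⟨J, D', rfl⟩ := exists_eq_firstRow_union_shiftDown D
    set R := pdWord (firstRow J)
    rw [pdWord_firstRow_union_shiftDown] at hword
    rw [card_firstRow_union_shiftDown, invNum_eq_ncard, ← hword] at hcard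
    have hRfin := inversionSet_pdWord_finite (firstRow J)
    have hvfin := (inversionSet_shiftPerm_finite_iff _).mpr (inversionSet_pdWord_finite D')
    have hle := ncard_inversionSet_mul_le hRfin hvfin
    have hR := ncard_inversionSet_pdWord_le (firstRow J)
    have hv := ncard_inversionSet_pdWord_le D'
    rw [card_firstRow] at hR
    rw [← ncard_inversionSet_shiftPerm] at hv
    have hgood := (ncard_inversionSet_mul_eq_add_iff hRfin hvfin).mp (by omega)
    have hR1 : R 1 = t + 1 := by
      rw [← hW1, ← hword, Perm.mul_apply, shiftPerm_apply_one]
    have hJ : J = Finset.Icc 1 t := eq_Icc_of_pdWord_firstRow hR1 fun a b ha hab hlt =>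
      PNat.lt_add_one_iff.mp (hR1 ▸ Avoids132.apply_lt_apply_one_of_mul (hword ▸ hW)
        (shiftPerm_apply_one _) hgood ha hab hlt)
    subst hJ
    have hu : pdWord D' = W' := shiftPerm_injective (mul_left_cancel (hword.trans hdec))
    refine ⟨D', ⟨?_, hu⟩, rfl⟩
    rw [hword, hlen, ← hu, ← ncard_inversionSet_shiftPerm, PNat.card_Icc, PNat.one_coe,
      Nat.add_sub_cancel] at hcard
    rw [invNum_eq_ncard, ← hu, ← ncard_inversionSet_shiftPerm]
    omega
  · rintro ⟨D', ⟨hcard, hword⟩, rfl⟩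
    refine ⟨?_, by rw [pdWord_firstRow_union_shiftDown, hword, hdec]⟩
    rw [card_firstRow_union_shiftDown, hcard, invNum_eq_ncard, invNum_eq_ncard, hlen,
      PNat.card_Icc, PNat.one_coe, Nat.add_sub_cancel]

theorem Equiv.Perm.Avoids132.existsUnique_isPipeDream {W : Perm ℕ+} (hW : Avoids132 W)
    (hfin : (inversionSet W).Finite) : ∃! D, IsPipeDream W D := by
  induction h : (inversionSet W).ncard using Nat.strong_induction_on generalizing W with
  | _ n ih =>
  rcases eq_or_ne (W 1) 1 with hW1 | hW1
  · obtain rfl : W = 1 := hW.eq_one_of_apply_bot hW1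
    refine ⟨∅, ⟨by simp [invNum_eq_ncard], pdWord_empty⟩, fun D hD => ?_⟩
    simpa [IsPipeDream, invNum_eq_ncard] using hD.1
  · obtain ⟨t, ht⟩ := PNat.exists_eq_succ_of_ne_one hW1
    obtain ⟨W', hdec, hlen, hW', hfin'⟩ := hW.exists_eq_mul_shiftPerm hfin ht
    obtain ⟨D₀, hD₀, huniq⟩ := ih _ (by rw [← h, hlen]; have := t.pos; omega) hW' hfin' rfl
    have hiff := fun D => isPipeDream_iff_of_eq_mul_shiftPerm (D := D) hW ht hdec hlen
    refine ⟨_, (hiff _).mpr ⟨D₀, hD₀, rfl⟩, fun D hD => ?_⟩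
    obtain ⟨D', hD', rfl⟩ := (hiff D).mp hD
    rw [huniq D' hD']

theorem Equiv.Perm.Avoids132.nu_eq_one {W : Perm ℕ+} (hW : Avoids132 W)
    (hfin : (inversionSet W).Finite) : nu W = 1 := by
  obtain ⟨D, hD, huniq⟩ := hW.existsUnique_isPipeDream hfin
  exact Set.ncard_eq_one.mpr ⟨D, Set.ext fun D' => ⟨huniq D', fun h => h ▸ hD⟩⟩

section Extend

variable {n : ℕ} (w : Perm (Fin n))

theorem extendPerm_apply_of_lt {x : ℕ+} (hx : n < (x : ℕ)) : extendPerm w x = x :=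
  extendDomain_apply_not_subtype _ _ (not_le.mpr hx)

theorem extendPerm_apply_finPNatEquiv (i : Fin n) :
    extendPerm w (finPNatEquiv n i) = finPNatEquiv n (w i) :=
  extendDomain_apply_image _ _ i

theorem strictMono_finPNatEquiv : StrictMono fun i : Fin n => (finPNatEquiv n i : ℕ+) :=
  fun i j h => by
    rw [← PNat.coe_lt_coe]
    simpa [finPNatEquiv] using h

theorem exists_finPNatEquiv_eq {x : ℕ+} (hx : (x : ℕ) ≤ n) : ∃ i, (finPNatEquiv n i : ℕ+) = x :=
  ⟨(finPNatEquiv n).symm ⟨x, hx⟩, by simp⟩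

theorem le_of_mem_inversionSet_extendPerm {p : ℕ+ × ℕ+} (hp : p ∈ inversionSet (extendPerm w)) :
    (p.2 : ℕ) ≤ n := by
  by_contra! hq
  obtain ⟨hpq, hlt⟩ := hp
  rw [extendPerm_apply_of_lt w hq] at hlt
  rcases le_or_gt (p.1 : ℕ) n with hp | hp
  · obtain ⟨i, hi⟩ := exists_finPNatEquiv_eq hp
    rw [← hi, extendPerm_apply_finPNatEquiv, ← PNat.coe_lt_coe] at hlt
    exact (finPNatEquiv n (w i)).2.not_gt (hq.trans hlt)
  · rw [extendPerm_apply_of_lt w hp] at hlt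
    exact lt_asymm hpq hlt

theorem inversionSet_extendPerm_finite : (inversionSet (extendPerm w)).Finite := by
  have hS : {x : ℕ+ | (x : ℕ) ≤ n}.Finite :=
    (Set.finite_le_nat n).preimage PNat.coe_injective.injOn
  refine (hS.prod hS).subset fun p hp => ⟨?_, le_of_mem_inversionSet_extendPerm w hp⟩
  exact (PNat.coe_le_coe _ _).mpr hp.1.le |>.trans (le_of_mem_inversionSet_extendPerm w hp)

theorem Equiv.Perm.Avoids132.extendPerm (hw : Avoids132 w) : Avoids132 (extendPerm w) := by
  rintro ⟨a, b, d, hab, hbd, h₁, h₂⟩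
  have hd := le_of_mem_inversionSet_extendPerm w (p := (b, d)) ⟨hbd, h₂⟩
  have hb : (b : ℕ) ≤ n := ((PNat.coe_lt_coe _ _).mpr hbd).le.trans hd
  have ha : (a : ℕ) ≤ n := ((PNat.coe_lt_coe _ _).mpr hab).le.trans hb
  obtain ⟨i, rfl⟩ := exists_finPNatEquiv_eq ha
  obtain ⟨j, rfl⟩ := exists_finPNatEquiv_eq hb
  obtain ⟨k, rfl⟩ := exists_finPNatEquiv_eq hd
  simp only [extendPerm_apply_finPNatEquiv, strictMono_finPNatEquiv.lt_iff_lt] at hab hbd h₁ h₂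
  exact hw ⟨i, j, k, hab, hbd, h₁, h₂⟩

end Extend

theorem Equiv.Perm.Avoids132.of_pOcc_ne_zero {m n : ℕ} {u : Perm (Fin m)} {w : Perm (Fin n)}
    (hw : Avoids132 w) (hocc : pOcc u w ≠ 0) : Avoids132 u := by
  obtain ⟨a, ha, hpat⟩ := Set.nonempty_of_ncard_ne_zero hocc
  rintro ⟨x, y, z, hxy, hyz, h₁, h₂⟩
  refine hw ⟨a x, a y, a z, ha hxy, ha hyz, (hpat x z (hxy.trans hyz)).mpr h₁, ?_⟩
  exact lt_of_le_of_ne (not_lt.mp fun h => (hpat y z hyz).mp h |>.not_gt h₂)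
    fun h => hyz.ne' (ha.injective (w.injective h))

/-- if `c(w) = ν(w) - 1 - Σ_{m=1}^{n-1} Σ_{u ∈ S_m} c(u) p_u(w)` for all
`w ∈ S_n`, `n ≥ 1`, then `c(w) = 0` whenever `w` avoids the pattern 132. -/
theorem c_eq_zero_of_avoids_132 (c : (m : ℕ) → Equiv.Perm (Fin m) → ℤ)
    (hc : ∀ (n : ℕ), 1 ≤ n → ∀ w : Equiv.Perm (Fin n),
      c n w = (nu (extendPerm w) : ℤ) - 1 -
        ∑ m ∈ Finset.Icc 1 (n - 1), ∑ u : Equiv.Perm (Fin m), c m u * (pOcc u w : ℤ)) :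
    ∀ (n : ℕ), 1 ≤ n → ∀ w : Equiv.Perm (Fin n),
      (¬ ∃ x y z : Fin n, x < y ∧ y < z ∧ w x < w z ∧ w z < w y) →
      c n w = 0 := by
  intro n
  induction n using Nat.strong_induction_on with
  | _ n ih =>
  intro hn w hw
  have hterm : ∀ m ∈ Finset.Icc 1 (n - 1), ∀ u : Perm (Fin m), c m u * (pOcc u w : ℤ) = 0 := by
    intro m hm u
    rcases eq_or_ne (pOcc u w) 0 with h | h
    · simp [h]
    · rw [Finset.mem_Icc] at hm
      rw [ih m (by omega) hm.1 u (Avoids132.of_pOcc_ne_zero hw h), zero_mul]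
  rw [hc n hn w, Avoids132.nu_eq_one (Avoids132.extendPerm w hw)
    (inversionSet_extendPerm_finite w), Finset.sum_eq_zero fun m hm =>
      Finset.sum_eq_zero fun u _ => hterm m hm u]
  simp
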